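/- arXiv:1909.11350 — 10 statements merged into one kernel-verified Lean document; each statement's English description precedes it below -/
import Mathlib

section
/- For every Došen model M, all formulas A, B of L₁, every state s, and every n ≥ 1: s ⊨ A∖ⁿB if and only if for every path x̄ of length n and every state t, R⃖x̄ s t and x̄ ⊨ A imply t ⊨ B. -/
/-- Formulas of the language L₁. `ldiv A B` is A∖B, `rdiv B A` is B/A,
`ildiv A B` is A∖∖B (iterative left division), `irdiv B A` is B//A. -/
inductive Fm : Type where
  | var : ℕ → Fm
  | top : Fm
  | bot : Fm
  | and : Fm → Fm → Fm
  | or : Fm → Fm → Fm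
  | prod : Fm → Fm → Fm
  | ldiv : Fm → Fm → Fm
  | rdiv : Fm → Fm → Fm
  | ildiv : Fm → Fm → Fm
  | irdiv : Fm → Fm → Fm

/-- A Došen model on the set of states `S`: a ternary relation and a valuation. -/
structure DosenModel (S : Type*) where
  R : S → S → S → Prop
  V : ℕ → Set S

/-- `Rleft R x̄ s t` is the relation R⃖x̄ s t for a path x̄ (nonempty list). -/
def Rleft {S : Type*} (R : S → S → S → Prop) : List S → S → S → Prop
  | [], _, _ => False
  | [x], s, t => R x s t
  | x :: y :: xs, s, t => ∃ z, R x s z ∧ Rleft R (y :: xs) z t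

/-- `Rright R s x̄ t` is the relation R s x̄⃗ t for a path x̄ (nonempty list). -/
def Rright {S : Type*} (R : S → S → S → Prop) : S → List S → S → Prop
  | _, [], _ => False
  | s, [x], t => R s x t
  | s, x :: y :: xs, t => ∃ z, R s x z ∧ Rright R z (y :: xs) t

/-- Satisfaction: `sat M A s` means s ⊨ A in the model M. -/
def sat {S : Type*} (M : DosenModel S) : Fm → S → Prop
  | .var p, s => s ∈ M.V p
  | .top, _ => True
  | .bot, _ => False
  | .and A B, s => sat M A s ∧ sat M B s
  | .or A B, s => sat M A s ∨ sat M B s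
  | .prod A B, s => ∃ t u, M.R t u s ∧ sat M A t ∧ sat M B u
  | .ldiv A B, s => ∀ t u, M.R t s u → sat M A t → sat M B u
  | .rdiv B A, s => ∀ t u, M.R s t u → sat M A t → sat M B u
  | .ildiv A B, s =>
      ∀ (xs : List S) (t : S), xs ≠ [] → Rleft M.R xs s t → (∀ x ∈ xs, sat M A x) → sat M B t
  | .irdiv B A, s =>
      ∀ (xs : List S) (t : S), xs ≠ [] → Rright M.R s xs t → (∀ x ∈ xs, sat M A x) → sat M B t

/-- Validity of the sequent A ⊢ B in a model. -/
def valid {S : Type*} (M : DosenModel S) (A B : Fm) : Prop :=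
  ∀ s, sat M A s → sat M B s

/-- `ldivN A B n` is A∖ⁿB (meaningful for n ≥ 1): A∖¹B = A∖B, A∖ⁿ⁺¹B = A∖(A∖ⁿB). -/
def ldivN (A B : Fm) : ℕ → Fm
  | 0 => B
  | n + 1 => .ldiv A (ldivN A B n)

/-- `rdivN B A n` is B/ⁿA (meaningful for n ≥ 1): B/¹A = B/A, B/ⁿ⁺¹A = (B/ⁿA)/A. -/
def rdivN (B A : Fm) : ℕ → Fm
  | 0 => B
  | n + 1 => .rdiv (rdivN B A n) A

/-- `RIter R n` is the relation Rⁿ⁺¹ of the paper: R¹ = R,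
R^{n+1} s t u iff ∃ x y, R s y u ∧ Rⁿ x t y. -/
def RIter {S : Type*} (R : S → S → S → Prop) : ℕ → S → S → S → Prop
  | 0, s, t, u => R s t u
  | n + 1, s, t, u => ∃ x y, R s y u ∧ RIter R n x t y

/-- The left transitive closure R⁺ˡ = ⋃_{n ≥ 1} Rⁿ. -/
def RplusL {S : Type*} (R : S → S → S → Prop) (s t u : S) : Prop :=
  ∃ n, RIter R n s t u

/-- Provability in the axiom system IDFNL. `Prov A B` means A ⟶ B. -/
inductive Prov : Fm → Fm → Prop
  | id (A : Fm) : Prov A A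
  | top (A : Fm) : Prov A .top
  | bot (A : Fm) : Prov .bot A
  | andE1 (A B : Fm) : Prov (A.and B) A
  | andE2 (A B : Fm) : Prov (A.and B) B
  | orI1 (A B : Fm) : Prov A (A.or B)
  | orI2 (A B : Fm) : Prov B (A.or B)
  | distrib (A B C : Fm) : Prov (A.and (B.or C)) ((A.and B).or (A.and C))
  | ildivAnd (A B C : Fm) : Prov ((A.ildiv B).and (A.ildiv C)) (A.ildiv (B.and C))
  | ildivUnfold (A B : Fm) : Prov (A.ildiv B) ((A.ldiv B).and (A.ldiv (A.ildiv B)))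
  | ildivFold (A B : Fm) : Prov ((A.ldiv B).and (A.ldiv (A.ildiv B))) (A.ildiv B)
  | irdivAnd (A B C : Fm) : Prov ((B.irdiv A).and (C.irdiv A)) ((B.and C).irdiv A)
  | irdivUnfold (A B : Fm) : Prov (B.irdiv A) ((B.rdiv A).and ((B.irdiv A).rdiv A))
  | irdivFold (A B : Fm) : Prov (((B.irdiv A).rdiv A).and (B.rdiv A)) (B.irdiv A)
  | resL1 {A B C : Fm} : Prov (A.prod B) C → Prov B (A.ldiv C)
  | resL2 {A B C : Fm} : Prov B (A.ldiv C) → Prov (A.prod B) C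
  | resR1 {A B C : Fm} : Prov (A.prod B) C → Prov A (C.rdiv B)
  | resR2 {A B C : Fm} : Prov A (C.rdiv B) → Prov (A.prod B) C
  | andI {A B C : Fm} : Prov A B → Prov A C → Prov A (B.and C)
  | orE {A B C : Fm} : Prov A C → Prov B C → Prov (A.or B) C
  | cut {A B C : Fm} : Prov A B → Prov B C → Prov A C
  | ildivMono {A B C D : Fm} : Prov A B → Prov C D → Prov (B.ildiv C) (A.ildiv D)
  | irdivMono {A B C D : Fm} : Prov A B → Prov C D → Prov (C.irdiv B) (D.irdiv A)
  | ildivInd {A B : Fm} : Prov A (B.ldiv A) → Prov A (B.ildiv A)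
  | irdivInd {A B : Fm} : Prov A (A.rdiv B) → Prov A (A.irdiv B)

/-- Conjunction of a finite list of formulas (⋀∅ = ⊤). -/
def bigAnd : List Fm → Fm
  | [] => .top
  | A :: As => A.and (bigAnd As)

/-- Disjunction of a finite list of formulas (⋁∅ = ⊥). -/
def bigOr : List Fm → Fm
  | [] => .bot
  | A :: As => A.or (bigOr As)

/-- An independent IDFNL-pair: no finite Γ′ ⊆ Γ, Δ′ ⊆ Δ with ⋀Γ′ ⟶ ⋁Δ′. -/
def IndepPair (Γ Δ : Set Fm) : Prop :=
  ¬ ∃ (γ δ : List Fm), (∀ A ∈ γ, A ∈ Γ) ∧ (∀ A ∈ δ, A ∈ Δ) ∧ Prov (bigAnd γ) (bigOr δ)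

/-- A prime IDFNL-theory. -/
def PrimeTheory (T : Set Fm) : Prop :=
  (∀ A B, A ∈ T → B ∈ T → A.and B ∈ T) ∧
  (∀ A B, A ∈ T → Prov A B → B ∈ T) ∧
  (∀ A B, A.or B ∈ T → A ∈ T ∨ B ∈ T)

/-- Membership in the closure of a set of formulas Φ′: the smallest set
containing Φ′, ⊤, ⊥, closed under subformulas, and such that
A∖∖B ∈ Φ implies A∖B ∈ Φ and B//A ∈ Φ implies B/A ∈ Φ. -/
inductive Closure (Φ : Set Fm) : Fm → Prop
  | base {A : Fm} : A ∈ Φ → Closure Φ A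
  | top : Closure Φ .top
  | bot : Closure Φ .bot
  | andL {A B : Fm} : Closure Φ (A.and B) → Closure Φ A
  | andR {A B : Fm} : Closure Φ (A.and B) → Closure Φ B
  | orL {A B : Fm} : Closure Φ (A.or B) → Closure Φ A
  | orR {A B : Fm} : Closure Φ (A.or B) → Closure Φ B
  | prodL {A B : Fm} : Closure Φ (A.prod B) → Closure Φ A
  | prodR {A B : Fm} : Closure Φ (A.prod B) → Closure Φ B
  | ldivL {A B : Fm} : Closure Φ (A.ldiv B) → Closure Φ A
  | ldivR {A B : Fm} : Closure Φ (A.ldiv B) → Closure Φ B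
  | rdivL {A B : Fm} : Closure Φ (A.rdiv B) → Closure Φ A
  | rdivR {A B : Fm} : Closure Φ (A.rdiv B) → Closure Φ B
  | ildivL {A B : Fm} : Closure Φ (A.ildiv B) → Closure Φ A
  | ildivR {A B : Fm} : Closure Φ (A.ildiv B) → Closure Φ B
  | irdivL {A B : Fm} : Closure Φ (A.irdiv B) → Closure Φ A
  | irdivR {A B : Fm} : Closure Φ (A.irdiv B) → Closure Φ B
  | ildivDiv {A B : Fm} : Closure Φ (A.ildiv B) → Closure Φ (A.ldiv B)
  | irdivDiv {A B : Fm} : Closure Φ (B.irdiv A) → Closure Φ (B.rdiv A)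

/-- A set of formulas is closed iff it equals its own closure. -/
def ClosedSet (Φ : Set Fm) : Prop := {A | Closure Φ A} = Φ

/-- `entails Γ A`: ⋀Γ′ ⟶ A for some finite Γ′ ⊆ Γ. -/
def entails (Γ : Set Fm) (A : Fm) : Prop :=
  ∃ γ : List Fm, (∀ X ∈ γ, X ∈ Γ) ∧ Prov (bigAnd γ) A

/-- States of the canonical model over a (finite closed) set Φ:
independent IDFNL-pairs (a_in, a_out) with a_in ∪ a_out = Φ. -/
def CanState (Φ : Set Fm) : Type :=
  {a : Set Fm × Set Fm // IndepPair a.1 a.2 ∧ a.1 ∪ a.2 = Φ}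

/-- The canonical accessibility relation. -/
def canR (Φ : Set Fm) (a b c : CanState Φ) : Prop :=
  ∀ A B : Fm, A ∈ Φ → B ∈ Φ → entails a.1.1 A → entails b.1.1 (A.ldiv B) → entails c.1.1 B

/-- The canonical model M_Φ. -/
def canModel (Φ : Set Fm) : DosenModel (CanState Φ) :=
  ⟨canR Φ, fun p => {a | Fm.var p ∈ Φ ∧ Fm.var p ∈ a.1.1}⟩

section Rleft

variable {S : Type*} (R : S → S → S → Prop) (P Q : S → Prop) (s : S)

theorem forall_Rleft_length_one_iff :
    (∀ (xs : List S) (t : S), xs.length = 1 → Rleft R xs s t → (∀ x ∈ xs, P x) → Q t) ↔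
      ∀ x t, R x s t → P x → Q t := by
  constructor
  · intro h x t hR hx
    exact h [x] t rfl hR (by simpa using hx)
  · intro h xs t hlen hR hP
    obtain ⟨x, rfl⟩ := List.length_eq_one_iff.1 hlen
    exact h x t hR (hP x (List.mem_singleton_self x))

theorem forall_Rleft_length_succ_succ_iff (n : ℕ) :
    (∀ (xs : List S) (t : S), xs.length = n + 2 → Rleft R xs s t → (∀ x ∈ xs, P x) → Q t) ↔
      ∀ x z, R x s z → P x → ∀ (ys : List S) (t : S), ys.length = n + 1 →
        Rleft R ys z t → (∀ y ∈ ys, P y) → Q t := by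
  constructor
  · intro h x z hxz hx ys t hlen hR hP
    obtain ⟨y, ys, rfl⟩ := ys.exists_of_length_succ hlen
    exact h (x :: y :: ys) t (by simpa using hlen) ⟨z, hxz, hR⟩ (List.forall_mem_cons.2 ⟨hx, hP⟩)
  · intro h xs t hlen hR hP
    match xs, hlen, hR with
    | x :: y :: ys, hlen, ⟨z, hxz, hR⟩ =>
      rw [List.forall_mem_cons] at hP
      exact h x z hxz hP.1 (y :: ys) t (by simpa using hlen) hR hP.2

end Rleft

theorem sat_ldivN_succ_iff {S : Type*} (M : DosenModel S) (A B : Fm) (n : ℕ) (s : S) :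
    sat M (ldivN A B (n + 1)) s ↔
      ∀ (xs : List S) (t : S), xs.length = n + 1 → Rleft M.R xs s t →
        (∀ x ∈ xs, sat M A x) → sat M B t := by
  induction n generalizing s with
  | zero =>
    rw [forall_Rleft_length_one_iff]
    rfl
  | succ n ih =>
    rw [forall_Rleft_length_succ_succ_iff]
    exact forall₃_congr fun x z _ => imp_congr_right fun _ => ih z

theorem ldivN_sat_iff_general {S : Type} (M : DosenModel S) (A B : Fm) (s : S)
    (n : ℕ) (hn : 1 ≤ n) :
    sat M (ldivN A B n) s ↔
      ∀ (xs : List S) (t : S), xs.length = n → Rleft M.R xs s t →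
        (∀ x ∈ xs, sat M A x) → sat M B t := by
  obtain ⟨m, rfl⟩ := Nat.exists_eq_add_of_le' hn
  exact sat_ldivN_succ_iff M A B m s

/-- s ⊨ A∖ⁿB iff for all paths x̄ of length n and all t,
R⃖x̄ s t and x̄ ⊨ A imply t ⊨ B. -/
theorem ldivN_sat_iff {S : Type} [Nonempty S] (M : DosenModel S) (A B : Fm) (s : S)
    (n : ℕ) (hn : 1 ≤ n) :
    sat M (ldivN A B n) s ↔
      ∀ (xs : List S) (t : S), xs.length = n → Rleft M.R xs s t →
        (∀ x ∈ xs, sat M A x) → sat M B t :=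
  ldivN_sat_iff_general M A B s n hn
end

section
/- For every Došen model M, all formulas A, B of L₁, every state s, and every n ≥ 1: s ⊨ B/ⁿA if and only if for every path x̄ of length n and every state t, R s x̄⃗ t and x̄ ⊨ A imply t ⊨ B. -/
/-! The outermost `/A` of B/ⁿ⁺¹A = (B/ⁿA)/A consumes the first state of a path, so induction on
the length peels paths x :: x̄ from the front, matching the recursion of R s x̄⃗ t. -/

theorem sat_rdivN_succ {S : Type*} (M : DosenModel S) (A B : Fm) (n : ℕ) (s : S) :
    sat M (rdivN B A (n + 1)) s ↔
      ∀ x z, M.R s x z → sat M A x → sat M (rdivN B A n) z :=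
  Iff.rfl

theorem Rright_cons_iff {S : Type*} {R : S → S → S → Prop} {s x t : S} {xs : List S}
    (hxs : xs ≠ []) : Rright R s (x :: xs) t ↔ ∃ z, R s x z ∧ Rright R z xs t := by
  cases xs with
  | nil => exact absurd rfl hxs
  | cons y ys => rfl

theorem sat_rdivN_succ_iff {S : Type*} (M : DosenModel S) (A B : Fm) (n : ℕ) (s : S) :
    sat M (rdivN B A (n + 1)) s ↔
      ∀ (xs : List S) (t : S), xs.length = n + 1 → Rright M.R s xs t →
        (∀ x ∈ xs, sat M A x) → sat M B t := by
  induction n generalizing s with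
  | zero =>
    refine ⟨fun h xs t hlen hR hA => ?_, fun h x t hR hx => h [x] t rfl hR (by simpa using hx)⟩
    obtain ⟨x, rfl⟩ := List.length_eq_one_iff.mp hlen
    exact h x t hR (hA x (List.mem_singleton_self x))
  | succ n ih =>
    simp only [sat_rdivN_succ M A B (n + 1), ih]
    constructor
    · rintro h (_ | ⟨x, ys⟩) t hlen hR hA
      · simp at hlen
      have hys : ys ≠ [] := List.ne_nil_of_length_eq_add_one (Nat.succ.inj hlen)
      obtain ⟨z, hxz, hzt⟩ := (Rright_cons_iff hys).mp hR
      exact h x z hxz (hA x List.mem_cons_self) ys t (Nat.succ.inj hlen) hzt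
        fun y hy => hA y (List.mem_cons_of_mem x hy)
    · intro h x z hxz hx ys t hlen hzt hA
      have hys : ys ≠ [] := List.ne_nil_of_length_eq_add_one hlen
      exact h (x :: ys) t (by simp [hlen]) ((Rright_cons_iff hys).mpr ⟨z, hxz, hzt⟩)
        (List.forall_mem_cons.mpr ⟨hx, hA⟩)

theorem rdivN_sat_iff_general {S : Type} (M : DosenModel S) (A B : Fm) (s : S)
    (n : ℕ) (hn : 1 ≤ n) :
    sat M (rdivN B A n) s ↔
      ∀ (xs : List S) (t : S), xs.length = n → Rright M.R s xs t →
        (∀ x ∈ xs, sat M A x) → sat M B t := by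
  obtain ⟨m, rfl⟩ := Nat.exists_eq_add_of_le' hn
  exact sat_rdivN_succ_iff M A B m s

/-- s ⊨ B/ⁿA iff for all paths x̄ of length n and all t,
R s x̄⃗ t and x̄ ⊨ A imply t ⊨ B. -/
theorem rdivN_sat_iff {S : Type} [Nonempty S] (M : DosenModel S) (A B : Fm) (s : S)
    (n : ℕ) (hn : 1 ≤ n) :
    sat M (rdivN B A n) s ↔
      ∀ (xs : List S) (t : S), xs.length = n → Rright M.R s xs t →
        (∀ x ∈ xs, sat M A x) → sat M B t :=
  rdivN_sat_iff_general M A B s n hn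
end

section
/- For all formulas A, B of L₁, the sequents A∖∖B ⊢ A∖B ∧ A∖(A∖∖B) and B//A ⊢ B/A ∧ (B//A)/A are valid in every Došen frame. -/
/-! Unfolding a path at its first state: a path `x :: xs` from `s` to `t` is a single step
`R x s u` followed by the path `xs` from `u` to `t`. Hence the one-step paths give `A∖B`, and
prefixing a step to the paths tested at `u` gives `A∖(A∖∖B)`; symmetrically for `//`. -/

section Paths

variable {S : Type*} {R : S → S → S → Prop}

theorem Rleft_cons {x s u t : S} {xs : List S} (hxs : xs ≠ []) (hstep : R x s u)
    (hpath : Rleft R xs u t) : Rleft R (x :: xs) s t := by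
  obtain _ | ⟨y, ys⟩ := xs
  · exact absurd rfl hxs
  · exact ⟨u, hstep, hpath⟩

theorem Rright_cons {x s u t : S} {xs : List S} (hxs : xs ≠ []) (hstep : R s x u)
    (hpath : Rright R u xs t) : Rright R s (x :: xs) t := by
  obtain _ | ⟨y, ys⟩ := xs
  · exact absurd rfl hxs
  · exact ⟨u, hstep, hpath⟩

end Paths

section Unfold

variable {S : Type*} {M : DosenModel S} {A B : Fm} {s : S}

theorem sat_ldiv_of_sat_ildiv (h : sat M (A.ildiv B) s) : sat M (A.ldiv B) s :=
  fun t u hR ht => h [t] u (List.cons_ne_nil _ _) hR (List.forall_mem_singleton.2 ht)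

theorem sat_ldiv_ildiv_of_sat_ildiv (h : sat M (A.ildiv B) s) :
    sat M (A.ldiv (A.ildiv B)) s :=
  fun t _ hR ht xs v hxs hpath hA =>
    h (t :: xs) v (List.cons_ne_nil _ _) (Rleft_cons hxs hR hpath)
      (List.forall_mem_cons.2 ⟨ht, hA⟩)

theorem sat_rdiv_of_sat_irdiv (h : sat M (B.irdiv A) s) : sat M (B.rdiv A) s :=
  fun t u hR ht => h [t] u (List.cons_ne_nil _ _) hR (List.forall_mem_singleton.2 ht)

theorem sat_irdiv_rdiv_of_sat_irdiv (h : sat M (B.irdiv A) s) :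
    sat M ((B.irdiv A).rdiv A) s :=
  fun t _ hR ht xs v hxs hpath hA =>
    h (t :: xs) v (List.cons_ne_nil _ _) (Rright_cons hxs hR hpath)
      (List.forall_mem_cons.2 ⟨ht, hA⟩)

end Unfold

theorem ildiv_unfold_valid_general (A B : Fm) (S : Type) (M : DosenModel S) :
    valid M (A.ildiv B) ((A.ldiv B).and (A.ldiv (A.ildiv B))) ∧
    valid M (B.irdiv A) ((B.rdiv A).and ((B.irdiv A).rdiv A)) :=
  ⟨fun _ h => ⟨sat_ldiv_of_sat_ildiv h, sat_ldiv_ildiv_of_sat_ildiv h⟩,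
    fun _ h => ⟨sat_rdiv_of_sat_irdiv h, sat_irdiv_rdiv_of_sat_irdiv h⟩⟩

/-- A∖∖B ⊢ A∖B ∧ A∖(A∖∖B) and B//A ⊢ B/A ∧ (B//A)/A are valid in every Došen frame. -/
theorem ildiv_unfold_valid (A B : Fm) (S : Type) [Nonempty S] (M : DosenModel S) :
    valid M (A.ildiv B) ((A.ldiv B).and (A.ldiv (A.ildiv B))) ∧
    valid M (B.irdiv A) ((B.rdiv A).and ((B.irdiv A).rdiv A)) :=
  ildiv_unfold_valid_general A B S M
end

section
/- For all formulas A, B of L₁, the sequents A∖B ∧ A∖(A∖∖B) ⊢ A∖∖B and (B//A)/A ∧ B/A ⊢ B//A are valid in every Došen frame. -/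
/-! A path of length one is handled by the plain division. A longer path `x :: x̄` first
steps from `s` to some `z` through `x`, and dividing by the iterated division makes `z` satisfy
it along the remaining path `x̄`. -/

theorem sat_ildiv_of_sat_ldiv {S : Type*} (M : DosenModel S) {A B : Fm} {s : S}
    (hB : sat M (A.ldiv B) s) (hAB : sat M (A.ldiv (A.ildiv B)) s) :
    sat M (A.ildiv B) s := by
  rintro xs t - hR hA
  match xs, hR with
  | [x], hR => exact hB x t hR (hA x (List.mem_singleton_self x))
  | x :: y :: xs, ⟨z, hxz, hR⟩ =>
    exact hAB x z hxz (hA x List.mem_cons_self) (y :: xs) t (List.cons_ne_nil _ _) hR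
      fun w hw => hA w (List.mem_cons_of_mem x hw)

theorem sat_irdiv_of_sat_rdiv {S : Type*} (M : DosenModel S) {A B : Fm} {s : S}
    (hB : sat M (B.rdiv A) s) (hBA : sat M ((B.irdiv A).rdiv A) s) :
    sat M (B.irdiv A) s := by
  rintro xs t - hR hA
  match xs, hR with
  | [x], hR => exact hB x t hR (hA x (List.mem_singleton_self x))
  | x :: y :: xs, ⟨z, hxz, hR⟩ =>
    exact hBA x z hxz (hA x List.mem_cons_self) (y :: xs) t (List.cons_ne_nil _ _) hR
      fun w hw => hA w (List.mem_cons_of_mem x hw)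

theorem ildiv_fold_valid_general (A B : Fm) (S : Type) (M : DosenModel S) :
    valid M ((A.ldiv B).and (A.ldiv (A.ildiv B))) (A.ildiv B) ∧
    valid M (((B.irdiv A).rdiv A).and (B.rdiv A)) (B.irdiv A) :=
  ⟨fun _ h => sat_ildiv_of_sat_ldiv M h.1 h.2, fun _ h => sat_irdiv_of_sat_rdiv M h.2 h.1⟩

/-- A∖B ∧ A∖(A∖∖B) ⊢ A∖∖B and (B//A)/A ∧ B/A ⊢ B//A are valid in every Došen frame. -/
theorem ildiv_fold_valid (A B : Fm) (S : Type) [Nonempty S] (M : DosenModel S) :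
    valid M ((A.ldiv B).and (A.ldiv (A.ildiv B))) (A.ildiv B) ∧
    valid M (((B.irdiv A).rdiv A).and (B.rdiv A)) (B.irdiv A) :=
  ildiv_fold_valid_general A B S M
end

section
/- For every Došen model M and all formulas A, B of L₁: if the sequent A ⊢ B∖A is valid in M then the sequent A ⊢ B∖∖A is valid in M; and if the sequent A ⊢ A/B is valid in M then the sequent A ⊢ A//B is valid in M. -/
theorem Rleft_preserves {S : Type*} {R : S → S → S → Prop} {P Q : S → Prop}
    (step : ∀ x s t, R x s t → Q x → P s → P t) :
    ∀ {xs : List S} {s t : S}, Rleft R xs s t → (∀ x ∈ xs, Q x) → P s → P t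
  | [x], _, _, hR, hQ, hP => step x _ _ hR (hQ x List.mem_cons_self) hP
  | x :: _ :: _, _, _, ⟨_, hRx, hR⟩, hQ, hP =>
      Rleft_preserves step hR (fun z hz => hQ z (List.mem_cons_of_mem x hz))
        (step x _ _ hRx (hQ x List.mem_cons_self) hP)

theorem Rright_preserves {S : Type*} {R : S → S → S → Prop} {P Q : S → Prop}
    (step : ∀ s x t, R s x t → Q x → P s → P t) :
    ∀ {s : S} {xs : List S} {t : S}, Rright R s xs t → (∀ x ∈ xs, Q x) → P s → P t
  | _, [x], _, hR, hQ, hP => step _ x _ hR (hQ x List.mem_cons_self) hP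
  | _, x :: _ :: _, _, ⟨_, hRx, hR⟩, hQ, hP =>
      Rright_preserves step hR (fun z hz => hQ z (List.mem_cons_of_mem x hz))
        (step _ x _ hRx (hQ x List.mem_cons_self) hP)

theorem ildiv_induction_valid_general {S : Type} (M : DosenModel S) (A B : Fm) :
    (valid M A (B.ldiv A) → valid M A (B.ildiv A)) ∧
    (valid M A (A.rdiv B) → valid M A (A.irdiv B)) := by
  constructor
  · intro h s hs xs t _ hR hB
    exact Rleft_preserves (P := sat M A) (fun x s t hR hx hs => h s hs x t hR hx) hR hB hs
  · intro h s hs xs t _ hR hB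
    exact Rright_preserves (P := sat M A) (fun s x t hR hx hs => h s hs x t hR hx) hR hB hs

/-- If A ⊢ B∖A is valid in M then A ⊢ B∖∖A is valid in M; and if A ⊢ A/B is valid
in M then A ⊢ A//B is valid in M. -/
theorem ildiv_induction_valid {S : Type} [Nonempty S] (M : DosenModel S) (A B : Fm) :
    (valid M A (B.ldiv A) → valid M A (B.ildiv A)) ∧
    (valid M A (A.rdiv B) → valid M A (A.irdiv B)) :=
  ildiv_induction_valid_general M A B
end

section
/- For every Došen model M, all formulas A, B of L₁, and every state s: (i) if R⃖x̄ s u holds for a path x̄ with last element xₙ, then R⁺ˡ xₙ s u; (ii) consequently, if for all states t, u, R⁺ˡ t s u and t ⊨ A imply u ⊨ B, then s ⊨ A∖∖B. -/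
/-!
Peeling the first element `y` off a path replaces `s` by a state `z` with `R y s z`, and this step
is one more layer of the left iteration `Rⁿ`, added at its innermost position. Induction on the
path therefore lands in `R⁺ˡ` at the last element of the path.
-/

theorem RIter_succ_of_rel {S : Type*} {R : S → S → S → Prop} {y s z x u : S} (n : ℕ)
    (hR : R y s z) (hn : RIter R n x z u) : RIter R (n + 1) x s u := by
  induction n generalizing x u with
  | zero => exact ⟨y, z, hn, hR⟩
  | succ n ih =>
    obtain ⟨a, b, hxbu, hab⟩ := hn
    exact ⟨a, b, hxbu, ih hab⟩

theorem Rleft_cons_of_ne_nil {S : Type*} {R : S → S → S → Prop} {y s t : S} {xs : List S}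
    (hxs : xs ≠ []) : Rleft R (y :: xs) s t ↔ ∃ z, R y s z ∧ Rleft R xs z t := by
  obtain ⟨x, xs, rfl⟩ := List.exists_cons_of_ne_nil hxs
  rfl

theorem RplusL_of_Rleft_append_singleton {S : Type*} {R : S → S → S → Prop} {s u x : S}
    (ys : List S) (h : Rleft R (ys ++ [x]) s u) : RplusL R x s u := by
  induction ys generalizing s with
  | nil => exact ⟨0, h⟩
  | cons y ys ih =>
    obtain ⟨z, hyz, hzu⟩ := (Rleft_cons_of_ne_nil (by simp)).1 h
    obtain ⟨n, hn⟩ := ih hzu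
    exact ⟨n + 1, RIter_succ_of_rel n hyz hn⟩

theorem sat_ildiv_of_RplusL {S : Type*} (M : DosenModel S) {A B : Fm} {s : S}
    (h : ∀ t u, RplusL M.R t s u → sat M A t → sat M B u) : sat M (A.ildiv B) s := by
  intro xs t hne hR hA
  obtain ⟨ys, x, rfl⟩ := (List.eq_nil_or_concat xs).resolve_left hne
  exact h x t (RplusL_of_Rleft_append_singleton ys (by simpa using hR)) (hA x (by simp))

theorem ildiv_transClosure_general {S : Type} (M : DosenModel S) (A B : Fm) (s : S) :
    (∀ (ys : List S) (x u : S), Rleft M.R (ys ++ [x]) s u → RplusL M.R x s u) ∧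
    ((∀ t u : S, RplusL M.R t s u → sat M A t → sat M B u) → sat M (A.ildiv B) s) :=
  ⟨fun ys _ _ => RplusL_of_Rleft_append_singleton ys, sat_ildiv_of_RplusL M⟩

/-- (i) If R⃖x̄ s u holds for a path x̄ with last element x, then R⁺ˡ x s u;
(ii) consequently, if for all t, u, R⁺ˡ t s u and t ⊨ A imply u ⊨ B, then s ⊨ A∖∖B. -/
theorem ildiv_transClosure {S : Type} [Nonempty S] (M : DosenModel S) (A B : Fm) (s : S) :
    (∀ (ys : List S) (x u : S), Rleft M.R (ys ++ [x]) s u → RplusL M.R x s u) ∧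
    ((∀ t u : S, RplusL M.R t s u → sat M A t → sat M B u) → sat M (A.ildiv B) s) :=
  ildiv_transClosure_general M A B s
end

section
/- There exist a Došen model M, a state s of M, and propositional variables p, q such that s ⊨ p∖∖q, yet there exist states t, u with R⁺ˡ t s u, t ⊨ p and u ⊭ q. (In particular, the implication from s ⊨ A∖∖B to the condition 'for all t,u, R⁺ˡ t s u and t ⊨ A imply u ⊨ B' fails in general.) -/
/-!
A path x̄ witnessing `R⃖x̄ s t` must consist of `A`-states only, whereas in `R² t s u`, i.e.
`R x s y ∧ R t y u`, only `t` is constrained. So take `s` whose only left neighbour `x` (in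
`R x s y`) fails `p`: then `s ⊨ p∖∖q` holds vacuously, while `R x s y`, `R t y u` with
`t ⊨ p`, `u ⊭ q` give `R⁺ˡ t s u`.
-/

theorem Rleft_cons_exists {S : Type*} {R : S → S → S → Prop} {x : S} {xs : List S} {s t : S}
    (h : Rleft R (x :: xs) s t) : ∃ y, R x s y := by
  match xs, h with
  | [], h => exact ⟨t, h⟩
  | _ :: _, ⟨y, hy, _⟩ => exact ⟨y, hy⟩

theorem sat_ildiv_of_forall_not_sat {S : Type*} (M : DosenModel S) (A B : Fm) (s : S)
    (h : ∀ x y, M.R x s y → ¬ sat M A x) : sat M (A.ildiv B) s := by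
  rintro (_ | ⟨x, xs⟩) t hne hR hA
  · exact absurd rfl hne
  · obtain ⟨y, hy⟩ := Rleft_cons_exists hR
    exact absurd (hA x List.mem_cons_self) (h x y hy)

theorem RplusL_of_R_of_R {S : Type*} {R : S → S → S → Prop} {x y s t u : S}
    (hx : R x s y) (ht : R t y u) : RplusL R t s u :=
  ⟨1, x, y, ht, hx⟩

def twoStepModel : DosenModel (Fin 3) where
  R a b c := (a = 0 ∧ b = 0 ∧ c = 2) ∨ (a = 1 ∧ b = 2 ∧ c = 0)
  V n := {w | n = 0 ∧ w = 1}

/-- There are a Došen model, a state s and variables p, q with s ⊨ p∖∖q, yet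
R⁺ˡ t s u, t ⊨ p and u ⊭ q for some t, u. -/
theorem ildiv_transClosure_fails :
    ∃ (S : Type) (M : DosenModel S) (s : S) (p q : ℕ),
      sat M ((Fm.var p).ildiv (Fm.var q)) s ∧
      ∃ t u : S, RplusL M.R t s u ∧ sat M (Fm.var p) t ∧ ¬ sat M (Fm.var q) u := by
  refine ⟨Fin 3, twoStepModel, 0, 0, 1, ?_, 1, 0, ?_, ?_, ?_⟩
  · refine sat_ildiv_of_forall_not_sat _ _ _ _ fun x y hR hp => ?_
    simp only [twoStepModel, sat, Set.mem_ofPred_eq] at hR hp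
    omega
  · exact RplusL_of_R_of_R (x := 0) (y := 2) (Or.inl ⟨rfl, rfl, rfl⟩) (Or.inr ⟨rfl, rfl, rfl⟩)
  · exact ⟨rfl, rfl⟩
  · simp [twoStepModel, sat]
end

section
/- There exist a Došen model M and formulas A, B, C of L₁ such that the sequent A∖∖C ∧ B∖∖C ⊢ (A∨B)∖∖C is not valid in M; likewise, there exist a Došen model M′ and formulas A′, B′, C′ such that the sequent C′//A′ ∧ C′//B′ ⊢ C′//(A′∨B′) is not valid in M′. -/
/-! A path for `A ∨ B` may mix `A`-steps and `B`-steps, which neither `A∖∖C` nor `B∖∖C`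
controls. In `counterModel` the `p₀`-steps from state 0 only reach 3 and no `p₁`-step starts
at 0, yet the path ⟨1, 2⟩ leads 0 → 3 → 4, where `p₂` fails. The statement for `//` is the
mirror image: exchanging the first two arguments of `R` turns `A∖∖B` into `B//A`. -/

def Fm.mirror : Fm → Fm
  | .var p => .var p
  | .top => .top
  | .bot => .bot
  | .and A B => .and A.mirror B.mirror
  | .or A B => .or A.mirror B.mirror
  | .prod A B => .prod B.mirror A.mirror
  | .ldiv A B => .rdiv B.mirror A.mirror
  | .rdiv B A => .ldiv A.mirror B.mirror
  | .ildiv A B => .irdiv B.mirror A.mirror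
  | .irdiv B A => .ildiv A.mirror B.mirror

def DosenModel.swap {S : Type*} (M : DosenModel S) : DosenModel S :=
  ⟨fun x s t => M.R s x t, M.V⟩

theorem DosenModel.swap_R {S : Type*} (M : DosenModel S) : M.swap.R = fun x s t => M.R s x t :=
  rfl

section

variable {S : Type*}

theorem rright_swap_iff (R : S → S → S → Prop) (xs : List S) (s t : S) :
    Rright (fun x s t => R s x t) s xs t ↔ Rleft R xs s t := by
  induction xs generalizing s with
  | nil => rfl
  | cons x xs ih =>
    cases xs with
    | nil => rfl
    | cons y ys => exact exists_congr fun z => and_congr_right fun _ => ih z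

theorem rleft_swap_iff (R : S → S → S → Prop) (xs : List S) (s t : S) :
    Rleft (fun x s t => R s x t) xs s t ↔ Rright R s xs t :=
  (rright_swap_iff (fun x s t => R s x t) xs s t).symm

theorem sat_swap_mirror (M : DosenModel S) (A : Fm) (s : S) :
    sat M.swap A.mirror s ↔ sat M A s := by
  induction A generalizing s with
  | var | top | bot => rfl
  | prod A B ihA ihB =>
    simp only [Fm.mirror, sat, DosenModel.swap_R, ihA, ihB]
    exact exists_comm.trans (by simp only [and_comm])
  | _ => simp only [Fm.mirror, sat, DosenModel.swap_R, rright_swap_iff, rleft_swap_iff, *]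

theorem valid_swap_mirror_iff (M : DosenModel S) (A B : Fm) :
    valid M.swap A.mirror B.mirror ↔ valid M A B :=
  forall_congr' fun s => by rw [sat_swap_mirror, sat_swap_mirror]

theorem Rleft.invariant {R : S → S → S → Prop} (P I : S → Prop)
    (hstep : ∀ x u v, P x → I u → R x u v → I v) {xs : List S} {s t : S}
    (hP : ∀ x ∈ xs, P x) (hs : I s) (hR : Rleft R xs s t) : I t := by
  induction xs generalizing s with
  | nil => exact hR.elim
  | cons x xs ih =>
    have hx := hP x List.mem_cons_self
    cases xs with
    | nil => exact hstep x s t hx hs hR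
    | cons y ys =>
      obtain ⟨z, hz, hR⟩ := hR
      exact ih (fun w hw => hP w (List.mem_cons_of_mem x hw)) (hstep x s z hx hs hz) hR

theorem sat_ildiv_of_invariant (M : DosenModel S) {A C : Fm} (I : S → Prop) {s : S} (hs : I s)
    (hstep : ∀ x u v, sat M A x → I u → M.R x u v → I v) (hC : ∀ t, I t → sat M C t) :
    sat M (A.ildiv C) s :=
  fun _ t _ hR hA => hC t (Rleft.invariant (sat M A) I hstep hA hs hR)

end

def counterModel : DosenModel (Fin 5) where
  R x s t := (x = 1 ∧ s = 0 ∧ t = 3) ∨ (x = 2 ∧ s = 3 ∧ t = 4)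
  V p := if p = 0 then {1} else if p = 1 then {2} else {4}ᶜ

theorem not_valid_ildiv_or_counterModel :
    ¬ valid counterModel (((Fm.var 0).ildiv (.var 2)).and ((Fm.var 1).ildiv (.var 2)))
      (((Fm.var 0).or (.var 1)).ildiv (.var 2)) := by
  intro h
  -- every `p₀`-step lands in 3, and no `p₁`-step leaves 0
  have hs : sat counterModel (((Fm.var 0).ildiv (.var 2)).and ((Fm.var 1).ildiv (.var 2))) 0 :=
    ⟨sat_ildiv_of_invariant _ (· ≠ 4) (by decide) (by simp [sat, counterModel]; decide)
      (by simp [sat, counterModel]),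
     sat_ildiv_of_invariant _ (· = 0) rfl (by simp [sat, counterModel]; decide)
      (by simp [sat, counterModel])⟩
  have h4 := h 0 hs [1, 2] 4 (List.cons_ne_nil _ _)
    ⟨3, Or.inl ⟨rfl, rfl, rfl⟩, Or.inr ⟨rfl, rfl, rfl⟩⟩ (by simp [sat, counterModel])
  simp [sat, counterModel] at h4

/-- A∖∖C ∧ B∖∖C ⊢ (A∨B)∖∖C and C//A ∧ C//B ⊢ C//(A∨B) are not valid in general. -/
theorem ildiv_or_not_valid :
    (∃ (S : Type) (M : DosenModel S), Nonempty S ∧ ∃ A B C : Fm,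
      ¬ valid M ((A.ildiv C).and (B.ildiv C)) ((A.or B).ildiv C)) ∧
    (∃ (S' : Type) (M' : DosenModel S'), Nonempty S' ∧ ∃ A' B' C' : Fm,
      ¬ valid M' ((C'.irdiv A').and (C'.irdiv B')) (C'.irdiv (A'.or B'))) :=
  ⟨⟨Fin 5, counterModel, ⟨0⟩, _, _, _, not_valid_ildiv_or_counterModel⟩,
   ⟨Fin 5, counterModel.swap, ⟨0⟩, _, _, _,
    (valid_swap_mirror_iff _ _ _).not.mpr not_valid_ildiv_or_counterModel⟩⟩
end

section
/- (Pair Extension) Let (Γ,Δ) be an independent IDFNL-pair and let Φ be a set of formulas of L₁ with Γ ∪ Δ ⊆ Φ. Then there is an independent IDFNL-pair (Γ′,Δ′) such that Γ ⊆ Γ′, Δ ⊆ Δ′ and Γ′ ∪ Δ′ = Φ. -/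
/-!
The pair is enlarged by Zorn's lemma inside the componentwise-ordered set of independent pairs
whose formulas lie in `Φ`. Independence only involves finitely many formulas at a time, so the
union of a chain is again independent. A maximal pair already covers `Φ`: any formula `A` can
be added to one of its sides, since otherwise a cut on `A`, admissible thanks to distributivity,
would refute the independence of the pair.
-/

lemma prov_bigAnd_of_mem {γ : List Fm} {X : Fm} (h : X ∈ γ) : Prov (bigAnd γ) X := by
  induction γ with
  | nil => cases h
  | cons Y γ ih =>
    rcases List.mem_cons.1 h with rfl | h
    · exact .andE1 _ _
    · exact .cut (.andE2 _ _) (ih h)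

lemma prov_bigAnd_of_subset {γ γ' : List Fm} (h : γ ⊆ γ') : Prov (bigAnd γ') (bigAnd γ) := by
  induction γ with
  | nil => exact .top _
  | cons Y γ ih =>
    exact .andI (prov_bigAnd_of_mem (h List.mem_cons_self)) (ih (List.subset_of_cons_subset h))

lemma prov_bigOr_of_mem {δ : List Fm} {X : Fm} (h : X ∈ δ) : Prov X (bigOr δ) := by
  induction δ with
  | nil => cases h
  | cons Y δ ih =>
    rcases List.mem_cons.1 h with rfl | h
    · exact .orI1 _ _
    · exact .cut (ih h) (.orI2 _ _)

lemma prov_bigOr_of_subset {δ δ' : List Fm} (h : δ ⊆ δ') : Prov (bigOr δ) (bigOr δ') := by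
  induction δ with
  | nil => exact .bot _
  | cons Y δ ih =>
    exact .orE (prov_bigOr_of_mem (h List.mem_cons_self)) (ih (List.subset_of_cons_subset h))

namespace Prov

lemma mono_bigAnd_bigOr {γ γ' δ δ' : List Fm} (h : Prov (bigAnd γ) (bigOr δ)) (hγ : γ ⊆ γ')
    (hδ : δ ⊆ δ') : Prov (bigAnd γ') (bigOr δ') :=
  .cut (prov_bigAnd_of_subset hγ) (.cut h (prov_bigOr_of_subset hδ))

-- `⋀γ ⟶ ⋀γ ∧ (A ∨ ⋁δ) ⟶ (⋀γ ∧ A) ∨ (⋀γ ∧ ⋁δ) ⟶ ⋁δ`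
lemma cut_bigAnd_bigOr {γ δ : List Fm} {A : Fm} (h₁ : Prov (bigAnd (A :: γ)) (bigOr δ))
    (h₂ : Prov (bigAnd γ) (bigOr (A :: δ))) : Prov (bigAnd γ) (bigOr δ) := by
  have h₁' : Prov ((bigAnd γ).and A) (bigOr δ) := .cut (.andI (.andE2 _ _) (.andE1 _ _)) h₁
  exact .cut (.andI (.id _) h₂) (.cut (.distrib _ _ _) (.orE h₁' (.andE2 _ _)))

end Prov

namespace IndepPair

lemma exists_prov_of_not_insert_left {Γ Δ : Set Fm} {A : Fm}
    (h : ¬ IndepPair (insert A Γ) Δ) : ∃ γ δ : List Fm, (∀ X ∈ γ, X ∈ Γ) ∧ (∀ X ∈ δ, X ∈ Δ) ∧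
      Prov (bigAnd (A :: γ)) (bigOr δ) := by
  classical
  obtain ⟨γ, δ, hγ, hδ, hp⟩ := not_not.1 h
  refine ⟨γ.filter (· ≠ A), δ, fun X hX => ?_, hδ,
    hp.mono_bigAnd_bigOr (fun X hX => ?_) (List.Subset.refl _)⟩
  · simp only [List.mem_filter, decide_eq_true_eq] at hX
    exact (hγ X hX.1).resolve_left hX.2
  · by_cases hXA : X = A <;> simp [hXA, hX]

lemma exists_prov_of_not_insert_right {Γ Δ : Set Fm} {A : Fm}
    (h : ¬ IndepPair Γ (insert A Δ)) : ∃ γ δ : List Fm, (∀ X ∈ γ, X ∈ Γ) ∧ (∀ X ∈ δ, X ∈ Δ) ∧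
      Prov (bigAnd γ) (bigOr (A :: δ)) := by
  classical
  obtain ⟨γ, δ, hγ, hδ, hp⟩ := not_not.1 h
  refine ⟨γ, δ.filter (· ≠ A), hγ, fun X hX => ?_,
    hp.mono_bigAnd_bigOr (List.Subset.refl _) (fun X hX => ?_)⟩
  · simp only [List.mem_filter, decide_eq_true_eq] at hX
    exact (hδ X hX.1).resolve_left hX.2
  · by_cases hXA : X = A <;> simp [hXA, hX]

lemma insert_left_or_insert_right {Γ Δ : Set Fm} (h : IndepPair Γ Δ) (A : Fm) :
    IndepPair (insert A Γ) Δ ∨ IndepPair Γ (insert A Δ) := by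
  by_contra! ⟨h₁, h₂⟩
  obtain ⟨γ₁, δ₁, hγ₁, hδ₁, hp₁⟩ := exists_prov_of_not_insert_left h₁
  obtain ⟨γ₂, δ₂, hγ₂, hδ₂, hp₂⟩ := exists_prov_of_not_insert_right h₂
  refine h ⟨γ₁ ++ γ₂, δ₁ ++ δ₂, ?_, ?_, Prov.cut_bigAnd_bigOr (A := A) ?_ ?_⟩
  · simpa [or_imp, forall_and] using ⟨hγ₁, hγ₂⟩
  · simpa [or_imp, forall_and] using ⟨hδ₁, hδ₂⟩
  · exact hp₁.mono_bigAnd_bigOr (List.cons_subset_cons _ (List.subset_append_left _ _))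
      (List.subset_append_left _ _)
  · exact hp₂.mono_bigAnd_bigOr (List.subset_append_right _ _)
      (List.cons_subset_cons _ (List.subset_append_right _ _))

lemma biUnion_of_isChain {c : Set (Set Fm × Set Fm)} (hc : IsChain (· ≤ ·) c)
    (hne : c.Nonempty) (h : ∀ p ∈ c, IndepPair p.1 p.2) :
    IndepPair (⋃ p ∈ c, p.1) (⋃ p ∈ c, p.2) := by
  classical
  rintro ⟨γ, δ, hγ, hδ, hp⟩
  have hdir := hc.directedOn
  obtain ⟨p, hpc, hγp⟩ := (hdir.mono fun _ _ h => h.1).exists_mem_subset_of_finset_subset_biUnion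
    hne (s := γ.toFinset) fun A hA => hγ A (List.mem_toFinset.1 hA)
  obtain ⟨q, hqc, hδq⟩ := (hdir.mono fun _ _ h => h.2).exists_mem_subset_of_finset_subset_biUnion
    hne (s := δ.toFinset) fun A hA => hδ A (List.mem_toFinset.1 hA)
  obtain ⟨r, hrc, hpr, hqr⟩ := hdir p hpc q hqc
  exact h r hrc ⟨γ, δ, fun A hA => hpr.1 (hγp (by simpa using hA)),
    fun A hA => hqr.2 (hδq (by simpa using hA)), hp⟩

end IndepPair

def indepPairsWithin (Φ : Set Fm) : Set (Set Fm × Set Fm) :=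
  {p | IndepPair p.1 p.2 ∧ p.1 ∪ p.2 ⊆ Φ}

lemma exists_le_maximal_mem_indepPairsWithin {Φ : Set Fm} {p : Set Fm × Set Fm}
    (hp : p ∈ indepPairsWithin Φ) : ∃ m, p ≤ m ∧ Maximal (· ∈ indepPairsWithin Φ) m := by
  refine zorn_le_nonempty₀ _ (fun c hcΦ hc q hq => ?_) p hp
  refine ⟨(⋃ r ∈ c, r.1, ⋃ r ∈ c, r.2),
    ⟨IndepPair.biUnion_of_isChain hc ⟨q, hq⟩ fun r hr => (hcΦ hr).1, ?_⟩,
    fun r hr => ⟨Set.subset_biUnion_of_mem (u := Prod.fst) hr,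
      Set.subset_biUnion_of_mem (u := Prod.snd) hr⟩⟩
  exact Set.union_subset (Set.iUnion₂_subset fun r hr => Set.subset_union_left.trans (hcΦ hr).2)
    (Set.iUnion₂_subset fun r hr => Set.subset_union_right.trans (hcΦ hr).2)

lemma union_eq_of_maximal_mem_indepPairsWithin {Φ : Set Fm} {m : Set Fm × Set Fm}
    (hm : Maximal (· ∈ indepPairsWithin Φ) m) : m.1 ∪ m.2 = Φ := by
  obtain ⟨⟨hind, hsub⟩, hmax⟩ := hm
  refine hsub.antisymm fun A hA => ?_
  rcases hind.insert_left_or_insert_right A with h | h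
  · have hle := hmax (y := (insert A m.1, m.2))
      ⟨h, by rw [Set.insert_union]; exact Set.insert_subset hA hsub⟩
      ⟨Set.subset_insert _ _, le_rfl⟩
    exact Or.inl (hle.1 (Set.mem_insert _ _))
  · have hle := hmax (y := (m.1, insert A m.2))
      ⟨h, by rw [Set.union_insert]; exact Set.insert_subset hA hsub⟩
      ⟨le_rfl, Set.subset_insert _ _⟩
    exact Or.inr (hle.2 (Set.mem_insert _ _))

/-- Pair Extension: any independent IDFNL-pair (Γ,Δ) with Γ ∪ Δ ⊆ Φ extends to an
independent pair (Γ′,Δ′) with Γ ⊆ Γ′, Δ ⊆ Δ′ and Γ′ ∪ Δ′ = Φ. -/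
theorem pair_extension (Γ Δ Φ : Set Fm) (h : IndepPair Γ Δ) (hsub : Γ ∪ Δ ⊆ Φ) :
    ∃ Γ' Δ' : Set Fm, IndepPair Γ' Δ' ∧ Γ ⊆ Γ' ∧ Δ ⊆ Δ' ∧ Γ' ∪ Δ' = Φ := by
  obtain ⟨m, ⟨hΓ, hΔ⟩, hm⟩ :=
    exists_le_maximal_mem_indepPairsWithin (Φ := Φ) (p := (Γ, Δ)) ⟨h, hsub⟩
  exact ⟨m.1, m.2, hm.prop.1, hΓ, hΔ, union_eq_of_maximal_mem_indepPairsWithin hm⟩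
end

section
/- If (Γ,Δ) is an independent IDFNL-pair, then there is a prime IDFNL-theory Σ such that Γ ⊆ Σ and Δ ∩ Σ = ∅. -/
/-! Lindenbaum's lemma. Independence of a pair `(T, Δ)` only depends on finite parts of `T`, so by
the Teichmüller–Tukey lemma `Γ` extends to a maximal `M` with `(M, Δ)` independent. Adding a formula
entailed by `M` cannot create a dependence (cut), so `M` is deductively closed; if `A ∨ B ∈ M` but
neither `A` nor `B` is, the two dependences of `M ∪ {A}` and `M ∪ {B}` combine, by distributivity,
into a dependence of `M` itself. -/

namespace Prov

theorem and_mono_left {A A' B : Fm} (h : Prov A A') : Prov (A.and B) (A'.and B) :=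
  andI (cut (andE1 _ _) h) (andE2 _ _)

theorem bigAnd_of_mem {l : List Fm} {A : Fm} (h : A ∈ l) : Prov (bigAnd l) A := by
  induction l with
  | nil => cases h
  | cons B l ih =>
    rcases List.mem_cons.mp h with rfl | h
    · exact andE1 _ _
    · exact cut (andE2 _ _) (ih h)

theorem bigAnd_intro {l : List Fm} {C : Fm} (h : ∀ A ∈ l, Prov C A) : Prov C (bigAnd l) := by
  induction l with
  | nil => exact top C
  | cons B l ih =>
    exact andI (h B List.mem_cons_self) (ih fun A hA => h A (List.mem_cons_of_mem _ hA))

theorem bigOr_of_mem {l : List Fm} {A : Fm} (h : A ∈ l) : Prov A (bigOr l) := by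
  induction l with
  | nil => cases h
  | cons B l ih =>
    rcases List.mem_cons.mp h with rfl | h
    · exact orI1 _ _
    · exact cut (ih h) (orI2 _ _)

theorem bigOr_elim {l : List Fm} {C : Fm} (h : ∀ A ∈ l, Prov A C) : Prov (bigOr l) C := by
  induction l with
  | nil => exact bot C
  | cons B l ih =>
    exact orE (h B List.mem_cons_self) (ih fun A hA => h A (List.mem_cons_of_mem _ hA))

theorem bigAnd_of_subset {l l' : List Fm} (h : l' ⊆ l) : Prov (bigAnd l) (bigAnd l') :=
  bigAnd_intro fun _ hA => bigAnd_of_mem (h hA)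

theorem bigOr_of_subset {l l' : List Fm} (h : l ⊆ l') : Prov (bigOr l) (bigOr l') :=
  bigOr_elim fun _ hA => bigOr_of_mem (h hA)

end Prov

namespace entails

variable {T U : Set Fm} {A B C : Fm}

theorem of_mem (h : A ∈ T) : entails T A :=
  ⟨[A], by simpa using h, Prov.andE1 _ _⟩

theorem trans (h : entails T A) (hAB : Prov A B) : entails T B :=
  let ⟨γ, hγ, hp⟩ := h
  ⟨γ, hγ, Prov.cut hp hAB⟩

theorem mono (hTU : T ⊆ U) (h : entails T A) : entails U A :=
  let ⟨γ, hγ, hp⟩ := h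
  ⟨γ, fun X hX => hTU (hγ X hX), hp⟩

theorem and (hA : entails T A) (hB : entails T B) : entails T (A.and B) := by
  obtain ⟨γ₁, hγ₁, hp₁⟩ := hA
  obtain ⟨γ₂, hγ₂, hp₂⟩ := hB
  refine ⟨γ₁ ++ γ₂, fun X hX => (List.mem_append.mp hX).elim (hγ₁ X) (hγ₂ X), ?_⟩
  exact Prov.andI (Prov.cut (Prov.bigAnd_of_subset (List.subset_append_left _ _)) hp₁)
    (Prov.cut (Prov.bigAnd_of_subset (List.subset_append_right _ _)) hp₂)

theorem exists_of_insert (h : entails (insert A T) B) : ∃ C, entails T C ∧ Prov (C.and A) B := by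
  classical
  obtain ⟨γ, hγ, hp⟩ := h
  refine ⟨bigAnd (γ.filter (· ∈ T)),
    ⟨_, fun X hX => of_decide_eq_true (List.mem_filter.mp hX).2, Prov.id _⟩,
    Prov.cut (Prov.bigAnd_intro fun X hX => ?_) hp⟩
  rcases hγ X hX with rfl | hXT
  · exact Prov.andE2 _ _
  · exact Prov.cut (Prov.andE1 _ _)
      (Prov.bigAnd_of_mem (List.mem_filter.mpr ⟨hX, decide_eq_true hXT⟩))

theorem of_insert (hA : entails T A) (h : entails (insert A T) B) : entails T B :=
  let ⟨_, hC, hp⟩ := exists_of_insert h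
  (hC.and hA).trans hp

theorem insert_or (hA : entails (insert A T) C) (hB : entails (insert B T) C) :
    entails (insert (A.or B) T) C := by
  obtain ⟨C₁, hC₁, hp₁⟩ := exists_of_insert hA
  obtain ⟨C₂, hC₂, hp₂⟩ := exists_of_insert hB
  have hC : entails (insert (A.or B) T) ((C₁.and C₂).and (A.or B)) :=
    ((hC₁.and hC₂).mono (Set.subset_insert _ _)).and (of_mem (Set.mem_insert _ _))
  exact hC.trans <| Prov.cut (Prov.distrib _ _ _) <| Prov.orE
    (Prov.cut (Prov.and_mono_left (Prov.andE1 _ _)) hp₁)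
    (Prov.cut (Prov.and_mono_left (Prov.andE2 _ _)) hp₂)

end entails

theorem not_indepPair_iff {T Δ : Set Fm} :
    ¬ IndepPair T Δ ↔ ∃ δ : List Fm, (∀ X ∈ δ, X ∈ Δ) ∧ entails T (bigOr δ) := by
  rw [IndepPair, not_not]
  exact ⟨fun ⟨γ, δ, hγ, hδ, hp⟩ => ⟨δ, hδ, γ, hγ, hp⟩,
    fun ⟨δ, hδ, γ, hγ, hp⟩ => ⟨γ, δ, hγ, hδ, hp⟩⟩

namespace IndepPair

variable {T U Δ : Set Fm}

theorem mono (h : IndepPair U Δ) (hTU : T ⊆ U) : IndepPair T Δ := fun ⟨γ, δ, hγ, hδ, hp⟩ =>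
  h ⟨γ, δ, fun X hX => hTU (hγ X hX), hδ, hp⟩

theorem inter_eq_empty (h : IndepPair T Δ) : Δ ∩ T = ∅ :=
  Set.eq_empty_iff_forall_notMem.mpr fun X ⟨hXΔ, hXT⟩ =>
    h ⟨[X], [X], by simpa using hXT, by simpa using hXΔ, Prov.cut (Prov.andE1 _ _) (Prov.orI1 _ _)⟩

end IndepPair

theorem isOfFiniteCharacter_indepPair (Δ : Set Fm) :
    Order.IsOfFiniteCharacter {T | IndepPair T Δ} := by
  refine fun T => ⟨fun h U hU _ => IndepPair.mono h hU, fun h => ?_⟩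
  rintro ⟨γ, δ, hγ, hδ, hp⟩
  exact h {X | X ∈ γ} (fun X hX => hγ X hX) γ.finite_toSet ⟨γ, δ, fun _ hX => hX, hδ, hp⟩

section Maximal

variable {M Δ : Set Fm} (hM : Maximal (IndepPair · Δ) M)
include hM

theorem mem_of_entails_of_maximal_indepPair {A : Fm} (h : entails M A) : A ∈ M := by
  by_contra hA
  obtain ⟨δ, hδ, hent⟩ := not_indepPair_iff.mp fun hi => hA (hM.mem_of_prop_insert hi)
  exact not_indepPair_iff.mpr ⟨δ, hδ, h.of_insert hent⟩ hM.prop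

theorem primeTheory_of_maximal_indepPair : PrimeTheory M := by
  refine ⟨fun A B hA hB => mem_of_entails_of_maximal_indepPair hM
      ((entails.of_mem hA).and (entails.of_mem hB)),
    fun A B hA hAB => mem_of_entails_of_maximal_indepPair hM ((entails.of_mem hA).trans hAB),
    fun A B hAB => ?_⟩
  by_contra! hAB'
  obtain ⟨δA, hδA, hA⟩ := not_indepPair_iff.mp fun hi => hAB'.1 (hM.mem_of_prop_insert hi)
  obtain ⟨δB, hδB, hB⟩ := not_indepPair_iff.mp fun hi => hAB'.2 (hM.mem_of_prop_insert hi)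
  have hor := (hA.trans (Prov.bigOr_of_subset (List.subset_append_left _ _))).insert_or
    (hB.trans (Prov.bigOr_of_subset (List.subset_append_right _ _)))
  rw [Set.insert_eq_of_mem hAB] at hor
  exact not_indepPair_iff.mpr
    ⟨δA ++ δB, fun X hX => (List.mem_append.mp hX).elim (hδA X) (hδB X), hor⟩ hM.prop

end Maximal

/-- If (Γ,Δ) is an independent IDFNL-pair, then there is a prime IDFNL-theory Σ
with Γ ⊆ Σ and Δ ∩ Σ = ∅. -/
theorem prime_extension (Γ Δ : Set Fm) (h : IndepPair Γ Δ) :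
    ∃ T : Set Fm, PrimeTheory T ∧ Γ ⊆ T ∧ Δ ∩ T = ∅ := by
  obtain ⟨M, hΓM, hM⟩ := (isOfFiniteCharacter_indepPair Δ).exists_maximal h
  exact ⟨M, primeTheory_of_maximal_indepPair hM, hΓM, hM.prop.inter_eq_empty⟩
end
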